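/- arXiv:1405.1858 — 2 statements merged into one kernel-verified Lean document; each statement's English description precedes it below -/
import Mathlib

section
/- Let d ≥ 1, c₁ > 0, and let ψ : ℝ^d → ℝ^d and, for every ε > 0, ψ_ε : ℝ^d → ℝ^d be bijections such that ψ_ε, ψ_ε⁻¹, ψ and ψ⁻¹ are all Lipschitz with constant c₁, and suppose ψ_ε → ψ uniformly on every compact subset of ℝ^d as ε → 0. Let A ⊂ ℝ^d be a bounded set whose topological boundary has Lebesgue measure zero. Then λ(ψ_ε(A) △ ψ(A)) → 0 as ε → 0; equivalently, the indicator functions χ_{ψ_ε(A)} converge to χ_{ψ(A)} in L¹(ℝ^d). -/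
open MeasureTheory Metric Filter Topology
open scoped symmDiff NNReal

/-!
Let `N = ψ(∂A)`, a compact Lebesgue-null set. If `y ∉ A` is within distance `r` of a point of
`A`, the segment between them crosses `∂A` within distance `r` of `y`. Combined with the
bi-Lipschitz bounds this shows that, once `ψ_ε` is `η`-close to `ψ` on `closure A`, every point of
`ψ_ε(A) △ ψ(A)` lies within `(c₁² + 1) η` of `N`. Lipschitz maps preserve Lebesgue-null sets
(compare with the Hausdorff measure), so the closed thickenings of `N` have measure tending to
`λ(N) = 0`.
-/

theorem IsPreconnected.inter_frontier_nonempty {X : Type*} [TopologicalSpace X] {s t : Set X}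
    (hs : IsPreconnected s) (hst : (s ∩ t).Nonempty) (hst' : (s \ t).Nonempty) :
    (s ∩ frontier t).Nonempty := by
  by_contra h
  have hsub : s ⊆ interior t ∪ interior tᶜ := by
    rw [← compl_frontier_eq_union_interior]
    exact fun x hx hxt => h ⟨x, hx, hxt⟩
  have hdisj : Disjoint (interior t) (interior tᶜ) :=
    disjoint_compl_right.mono interior_subset interior_subset
  rcases hs.subset_or_subset isOpen_interior isOpen_interior hdisj hsub with hin | hout
  · obtain ⟨x, hxs, hxt⟩ := hst'
    exact hxt (interior_subset (hin hxs))
  · obtain ⟨x, hxs, hxt⟩ := hst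
    exact interior_subset (hout hxs) hxt

theorem exists_mem_frontier_dist_le {E : Type*} [NormedAddCommGroup E] [NormedSpace ℝ E]
    {A : Set E} {a y : E} (ha : a ∈ A) (hy : y ∉ A) :
    ∃ b ∈ frontier A, dist y b ≤ dist y a := by
  obtain ⟨b, hb_seg, hb_fr⟩ := (convex_segment y a).isPreconnected.inter_frontier_nonempty
    ⟨a, right_mem_segment ℝ y a, ha⟩ ⟨y, left_mem_segment ℝ y a, hy⟩
  refine ⟨b, hb_fr, ?_⟩
  linarith [dist_add_dist_of_mem_segment hb_seg, dist_nonneg (x := b) (y := a)]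

theorem exists_mem_frontier_dist_image_le {E F : Type*} [NormedAddCommGroup E]
    [NormedSpace ℝ E] [PseudoMetricSpace F] {K K' : ℝ≥0} {f : E → F}
    (hf : LipschitzWith K f) (hf' : AntilipschitzWith K' f) (hsurj : Function.Surjective f)
    {A : Set E} {a : E} {x : F} (ha : a ∈ A) (hx : x ∉ f '' A) :
    ∃ b ∈ frontier A, dist x (f b) ≤ K * K' * dist x (f a) := by
  obtain ⟨y, rfl⟩ := hsurj x
  have hy : y ∉ A := fun hy => hx ⟨y, hy, rfl⟩
  obtain ⟨b, hb, hyb⟩ := exists_mem_frontier_dist_le ha hy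
  refine ⟨b, hb, ?_⟩
  calc dist (f y) (f b) ≤ K * dist y b := hf.dist_le_mul y b
    _ ≤ K * dist y a := by gcongr
    _ ≤ K * (K' * dist (f y) (f a)) := by gcongr; exact hf'.le_mul_dist y a
    _ = K * K' * dist (f y) (f a) := by ring

theorem symmDiff_image_subset_cthickening {E F : Type*} [NormedAddCommGroup E]
    [NormedSpace ℝ E] [PseudoMetricSpace F] {K K' : ℝ≥0} {f g : E → F}
    (hf : LipschitzWith K f) (hf' : AntilipschitzWith K' f) (hf_surj : Function.Surjective f)
    (hg : LipschitzWith K g) (hg' : AntilipschitzWith K' g) (hg_surj : Function.Surjective g)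
    {A : Set E} {η : ℝ} (hfg : ∀ a ∈ closure A, dist (f a) (g a) ≤ η) :
    (f '' A) ∆ (g '' A) ⊆ cthickening ((K * K' + 1) * η) (g '' frontier A) := by
  rintro x (⟨⟨a, ha, rfl⟩, hx⟩ | ⟨⟨a, ha, rfl⟩, hx⟩)
  · obtain ⟨b, hb, hab⟩ := exists_mem_frontier_dist_image_le hg hg' hg_surj ha hx
    refine mem_cthickening_of_dist_le _ (g b) _ _ (Set.mem_image_of_mem g hb) ?_
    calc dist (f a) (g b) ≤ K * K' * dist (f a) (g a) := hab
      _ ≤ K * K' * η := by gcongr; exact hfg a (subset_closure ha)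
      _ ≤ (K * K' + 1) * η := by linarith [dist_nonneg.trans (hfg a (subset_closure ha))]
  · obtain ⟨b, hb, hab⟩ := exists_mem_frontier_dist_image_le hf hf' hf_surj ha hx
    refine mem_cthickening_of_dist_le _ (g b) _ _ (Set.mem_image_of_mem g hb) ?_
    calc dist (g a) (g b) ≤ dist (g a) (f b) + dist (f b) (g b) := dist_triangle _ _ _
      _ ≤ K * K' * dist (g a) (f a) + η := by
          gcongr; exact hfg b (frontier_subset_closure hb)
      _ ≤ K * K' * η + η := by
          gcongr; rw [dist_comm]; exact hfg a (subset_closure ha)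
      _ = (K * K' + 1) * η := by ring

theorem LipschitzWith.addHaar_image_eq_zero {E : Type*} [NormedAddCommGroup E]
    [NormedSpace ℝ E] [FiniteDimensional ℝ E] [MeasurableSpace E] [BorelSpace E]
    (μ : Measure E) [μ.IsAddHaarMeasure] {K : ℝ≥0} {f : E → E} (hf : LipschitzWith K f)
    {s : Set E} (hs : μ s = 0) : μ (f '' s) = 0 := by
  set n := Module.finrank ℝ E
  have hsH : μH[n] s = 0 := Measure.absolutelyContinuous_isAddHaarMeasure μH[n] μ hs
  have hfsH : μH[n] (f '' s) = 0 := nonpos_iff_eq_zero.mp <|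
    (hf.hausdorffMeasure_image_le n.cast_nonneg s).trans_eq (by rw [hsH, mul_zero])
  exact Measure.absolutelyContinuous_isAddHaarMeasure μ μH[n] hfsH

theorem tendsto_measure_of_eventually_subset_cthickening {α ι : Type*} [MetricSpace α]
    [MeasurableSpace α] [OpensMeasurableSpace α] [ProperSpace α] {μ : Measure α}
    [IsFiniteMeasureOnCompacts μ] {N : Set α} (hN : IsCompact N) (hN0 : μ N = 0)
    {s : ι → Set α} {l : Filter ι} (hs : ∀ δ > 0, ∀ᶠ i in l, s i ⊆ cthickening δ N) :
    Tendsto (fun i => μ (s i)) l (𝓝 0) := by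
  have hthick := tendsto_measure_cthickening_of_isCompact (μ := μ) hN
  rw [hN0] at hthick
  rw [ENNReal.tendsto_nhds_zero] at hthick ⊢
  intro r hr
  obtain ⟨δ, hδr, hδ⟩ :=
    ((hthick r hr).filter_mono nhdsWithin_le_nhds |>.and self_mem_nhdsWithin).exists
      (f := 𝓝[>] (0 : ℝ))
  filter_upwards [hs δ hδ] with i hi
  exact (measure_mono hi).trans hδr

theorem stmt_0_general (d : ℕ) (c₁ : ℝ)
    (ψ ψinv : EuclideanSpace ℝ (Fin d) → EuclideanSpace ℝ (Fin d))
    (ψε ψεinv : ℝ → EuclideanSpace ℝ (Fin d) → EuclideanSpace ℝ (Fin d))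
    (hψ_left : Function.LeftInverse ψinv ψ)
    (hψ_right : Function.RightInverse ψinv ψ)
    (hψε_left : ∀ ε > (0 : ℝ), Function.LeftInverse (ψεinv ε) (ψε ε))
    (hψε_right : ∀ ε > (0 : ℝ), Function.RightInverse (ψεinv ε) (ψε ε))
    (hψ_lip : LipschitzWith (Real.toNNReal c₁) ψ)
    (hψinv_lip : LipschitzWith (Real.toNNReal c₁) ψinv)
    (hψε_lip : ∀ ε > (0 : ℝ), LipschitzWith (Real.toNNReal c₁) (ψε ε))
    (hψεinv_lip : ∀ ε > (0 : ℝ), LipschitzWith (Real.toNNReal c₁) (ψεinv ε))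
    (hconv : ∀ K : Set (EuclideanSpace ℝ (Fin d)), IsCompact K →
      TendstoUniformlyOn (fun ε x => ψε ε x) ψ (𝓝[>] (0 : ℝ)) K)
    (A : Set (EuclideanSpace ℝ (Fin d)))
    (hA_bdd : Bornology.IsBounded A)
    (hA_bd : volume (frontier A) = 0) :
    Tendsto (fun ε => volume ((ψε ε '' A) ∆ (ψ '' A))) (𝓝[>] (0 : ℝ)) (𝓝 0) := by
  set K := Real.toNNReal c₁
  have hclA : IsCompact (closure A) := hA_bdd.isCompact_closure
  refine tendsto_measure_of_eventually_subset_cthickening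
    ((hclA.of_isClosed_subset isClosed_frontier frontier_subset_closure).image hψ_lip.continuous)
    (hψ_lip.addHaar_image_eq_zero volume hA_bd) fun δ hδ => ?_
  have hη : 0 < δ / (K * K + 1) := by positivity
  filter_upwards [Metric.tendstoUniformlyOn_iff.mp (hconv _ hclA) _ hη, self_mem_nhdsWithin]
    with ε hclose hε
  have hsub := symmDiff_image_subset_cthickening (hψε_lip ε hε)
    ((hψεinv_lip ε hε).to_rightInverse (hψε_left ε hε)) (hψε_right ε hε).surjective
    hψ_lip (hψinv_lip.to_rightInverse hψ_left) hψ_right.surjective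
    fun a ha => (dist_comm (ψ a) _ ▸ hclose a ha).le
  rwa [mul_div_cancel₀ _ (by positivity)] at hsub

/-- Lemma 2 of the paper: if uniformly bi-Lipschitz bijections `ψε` converge to `ψ`
uniformly on compact sets as `ε → 0⁺`, then for every bounded set `A` with
Lebesgue-null boundary, the Lebesgue measure of the symmetric difference
`ψε(A) △ ψ(A)` tends to `0`. -/
theorem stmt_0 (d : ℕ) (hd : 1 ≤ d) (c₁ : ℝ) (hc₁ : 0 < c₁)
    (ψ ψinv : EuclideanSpace ℝ (Fin d) → EuclideanSpace ℝ (Fin d))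
    (ψε ψεinv : ℝ → EuclideanSpace ℝ (Fin d) → EuclideanSpace ℝ (Fin d))
    (hψ_left : Function.LeftInverse ψinv ψ)
    (hψ_right : Function.RightInverse ψinv ψ)
    (hψε_left : ∀ ε > (0 : ℝ), Function.LeftInverse (ψεinv ε) (ψε ε))
    (hψε_right : ∀ ε > (0 : ℝ), Function.RightInverse (ψεinv ε) (ψε ε))
    (hψ_lip : LipschitzWith (Real.toNNReal c₁) ψ)
    (hψinv_lip : LipschitzWith (Real.toNNReal c₁) ψinv)
    (hψε_lip : ∀ ε > (0 : ℝ), LipschitzWith (Real.toNNReal c₁) (ψε ε))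
    (hψεinv_lip : ∀ ε > (0 : ℝ), LipschitzWith (Real.toNNReal c₁) (ψεinv ε))
    (hconv : ∀ K : Set (EuclideanSpace ℝ (Fin d)), IsCompact K →
      TendstoUniformlyOn (fun ε x => ψε ε x) ψ (𝓝[>] (0 : ℝ)) K)
    (A : Set (EuclideanSpace ℝ (Fin d)))
    (hA_bdd : Bornology.IsBounded A)
    (hA_bd : volume (frontier A) = 0) :
    Tendsto (fun ε => volume ((ψε ε '' A) ∆ (ψ '' A))) (𝓝[>] (0 : ℝ)) (𝓝 0) :=
  stmt_0_general d c₁ ψ ψinv ψε ψεinv hψ_left hψ_right hψε_left hψε_right hψ_lip hψinv_lip hψε_lip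
    hψεinv_lip hconv A hA_bdd hA_bd
end

section
/- Let L > 0 and let (f_n) be a sequence of functions f_n : ℝ^d → ℝ, each Lipschitz with constant L, such that f_n(0) → 0 and such that the (almost everywhere defined) gradients ∇f_n converge to 0 in the weak-* sense in L^∞: for every h ∈ L¹(ℝ^d) and every vector v ∈ ℝ^d, ∫_{ℝ^d} h(x) · (Df_n(x)[v]) dx → 0 as n → ∞, where Df_n(x) denotes the Fréchet derivative of f_n at x (which exists for a.e. x by Rademacher's theorem). Then f_n → 0 uniformly on every compact subset of ℝ^d. -/
open MeasureTheory Metric Filter Topology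

/-!
Fix a ball `B = B(0, r)`. Since each `fₙ` is `C`-Lipschitz, `∫_B (fₙ(y + v) - fₙ(y)) dy` differs
from `|B| (fₙ(v) - fₙ(0))` by at most `2 C r |B|`. Differentiating `s ↦ ∫_B (fₙ(y + s v) - fₙ(y))
dy` under the integral sign (Rademacher's theorem makes `Dfₙ` available a.e.) writes this integral
as `∫₀¹ ∫ 1_B(z - t v) Dfₙ(z)[v] dz dt`, which tends to `0` by the weak-* hypothesis and dominated
convergence in `t`. Letting `r → 0` gives `fₙ(v) - fₙ(0) → 0`, and the equicontinuity of a uniformly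
Lipschitz family upgrades pointwise convergence to uniform convergence on compact sets.
-/

theorem Equicontinuous.tendstoUniformlyOn_of_tendsto {ι X α : Type*} [TopologicalSpace X]
    [UniformSpace α] {F : ι → X → α} {f : X → α} {l : Filter ι} (hF : Equicontinuous F)
    (h : ∀ x, Tendsto (F · x) l (𝓝 (f x))) {K : Set X} (hK : IsCompact K) :
    TendstoUniformlyOn F f l K := by
  have H := (EquicontinuousOn.tendsto_uniformOnFun_iff_pi (𝔖 := {K | IsCompact K})
    (fun _ hK => hK) (Set.sUnion_eq_univ_iff.2 fun x => ⟨{x}, isCompact_singleton, rfl⟩)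
    (fun K _ => hF.equicontinuousOn K) l f).2 (tendsto_pi_nhds.2 h)
  exact UniformOnFun.tendsto_iff_tendstoUniformlyOn.1 H K hK

theorem setIntegral_comp_add_right_eq_integral_indicator {G : Type*} [AddGroup G]
    [MeasurableSpace G] [MeasurableAdd G] {μ : Measure G} [μ.IsAddRightInvariant]
    (φ : G → ℝ) {S : Set G} (hS : MeasurableSet S) (c : G) :
    ∫ y in S, φ (y + c) ∂μ = ∫ z, S.indicator 1 (z - c) * φ z ∂μ := by
  rw [← integral_indicator hS,
    ← integral_add_right_eq_self (fun z => S.indicator 1 (z - c) * φ z) c]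
  congr 1 with y
  by_cases hy : y ∈ S <;> simp [hy]

section

variable {E : Type*} [NormedAddCommGroup E] [MeasurableSpace E] {μ : Measure E} {C : NNReal}
  {g : E → ℝ} {S : Set E}

theorem LipschitzWith.integrableOn_comp_add_right_sub [OpensMeasurableSpace E]
    (hg : LipschitzWith C g) (hS : μ S ≠ ⊤) (v : E) :
    IntegrableOn (fun y => g (y + v) - g y) S μ := by
  refine Measure.integrableOn_of_bounded (M := C * ‖v‖) hS ?_ (ae_of_all _ fun y => ?_)
  · exact ((hg.continuous.comp (continuous_add_const v)).sub hg.continuous).aestronglyMeasurable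
  · simpa [dist_eq_norm] using hg.dist_le_mul (y + v) y

theorem LipschitzWith.norm_setIntegral_fderiv_apply_le [NormedSpace ℝ E]
    (hg : LipschitzWith C g) (hS : μ S ≠ ⊤) (c v : E) :
    ‖∫ y in S, fderiv ℝ g (y + c) v ∂μ‖ ≤ C * ‖v‖ * μ.real S :=
  norm_setIntegral_le_of_norm_le_const hS.lt_top fun y _ =>
    ((fderiv ℝ g (y + c)).le_opNorm v).trans
      (mul_le_mul_of_nonneg_right (norm_fderiv_le_of_lipschitz ℝ hg) (norm_nonneg v))

theorem LipschitzWith.norm_setIntegral_comp_add_right_sub_sub_le [OpensMeasurableSpace E]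
    (hg : LipschitzWith C g) (hS : μ S ≠ ⊤) {r : ℝ} (hSr : S ⊆ closedBall 0 r) (v : E) :
    ‖∫ y in S, (g (y + v) - g y) ∂μ - μ.real S * (g v - g 0)‖ ≤ 2 * C * r * μ.real S := by
  rw [← smul_eq_mul, ← setIntegral_const, ← integral_sub (hg.integrableOn_comp_add_right_sub hS v)
    (integrableOn_const hS)]
  refine norm_setIntegral_le_of_norm_le_const hS.lt_top fun y hy => ?_
  have hy : ‖y‖ ≤ r := mem_closedBall_zero_iff.1 (hSr hy)
  have h₁ := hg.dist_le_mul (y + v) v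
  have h₂ := hg.dist_le_mul y 0
  simp only [dist_eq_norm, add_sub_cancel_right, sub_zero] at h₁ h₂
  calc ‖g (y + v) - g y - (g v - g 0)‖ = ‖(g (y + v) - g v) - (g y - g 0)‖ := by ring_nf
    _ ≤ C * ‖y‖ + C * ‖y‖ := (_root_.norm_sub_le _ _).trans (add_le_add h₁ h₂)
    _ ≤ 2 * C * r := by nlinarith [C.coe_nonneg]

variable [NormedSpace ℝ E] [FiniteDimensional ℝ E] [BorelSpace E] [μ.IsAddHaarMeasure]

theorem LipschitzWith.hasDerivAt_setIntegral_comp_add_smul_sub (hg : LipschitzWith C g)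
    (hS : μ S ≠ ⊤) (v : E) (t : ℝ) :
    HasDerivAt (fun s : ℝ => ∫ y in S, (g (y + s • v) - g y) ∂μ)
      (∫ y in S, fderiv ℝ g (y + t • v) v ∂μ) t := by
  have hdiff : ∀ᵐ y ∂μ, DifferentiableAt ℝ g (y + t • v) :=
    (measurePreserving_add_right μ (t • v)).quasiMeasurePreserving.ae hg.ae_differentiableAt
  have hlip : ∀ y, LipschitzWith (Real.nnabs (C * ‖v‖)) (fun s : ℝ => g (y + s • v) - g y) := by
    refine fun y => LipschitzWith.of_dist_le_mul fun s s' => ?_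
    have := hg.dist_le_mul (y + s • v) (y + s' • v)
    rw [dist_add_left, dist_eq_norm (s • v), ← sub_smul, norm_smul, ← dist_eq_norm] at this
    rw [dist_sub_right, Real.coe_nnabs, abs_of_nonneg (by positivity)]
    linarith
  refine (hasDerivAt_integral_of_dominated_loc_of_lip (bound := fun _ => C * ‖v‖) univ_mem
    (Eventually.of_forall fun s => (hg.integrableOn_comp_add_right_sub hS (s • v)).1)
    (hg.integrableOn_comp_add_right_sub hS (t • v))
    ((measurable_fderiv_apply_const ℝ g v).comp (measurable_add_const (t • v))).aestronglyMeasurable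
    (ae_of_all _ fun y => ?_) (integrableOn_const hS) (ae_restrict_of_ae ?_)).2
  · exact (hlip y).lipschitzOnWith
  · filter_upwards [hdiff] with y hy
    have hline : HasDerivAt (fun s : ℝ => y + s • v) v t := by
      simpa using ((hasDerivAt_id t).smul_const v).const_add y
    exact (hy.hasFDerivAt.comp_hasDerivAt t hline).sub_const (g y)

theorem LipschitzWith.measurable_setIntegral_fderiv_comp_add_smul_apply (hg : LipschitzWith C g)
    (hS : μ S ≠ ⊤) (v : E) :
    Measurable fun t : ℝ => ∫ y in S, fderiv ℝ g (y + t • v) v ∂μ := by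
  convert measurable_deriv fun s : ℝ => ∫ y in S, (g (y + s • v) - g y) ∂μ using 1
  exact funext fun t => (hg.hasDerivAt_setIntegral_comp_add_smul_sub hS v t).deriv.symm

theorem LipschitzWith.setIntegral_comp_add_right_sub_eq_intervalIntegral (hg : LipschitzWith C g)
    (hS : μ S ≠ ⊤) (v : E) :
    ∫ y in S, (g (y + v) - g y) ∂μ = ∫ t in (0 : ℝ)..1, ∫ y in S, fderiv ℝ g (y + t • v) v ∂μ := by
  have hint : IntervalIntegrable (fun t : ℝ => ∫ y in S, fderiv ℝ g (y + t • v) v ∂μ) volume 0 1 :=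
    (intervalIntegrable_const (c := C * ‖v‖ * μ.real S)).mono_fun
      (hg.measurable_setIntegral_fderiv_comp_add_smul_apply hS v).aestronglyMeasurable
      (ae_of_all _ fun t => (hg.norm_setIntegral_fderiv_apply_le hS (t • v) v).trans
        (le_abs_self _))
  rw [intervalIntegral.integral_eq_sub_of_hasDerivAt
    (fun t _ => hg.hasDerivAt_setIntegral_comp_add_smul_sub hS v t) hint]
  simp

theorem tendsto_setIntegral_comp_add_right_sub_of_tendsto_integral_mul_fderiv {ι : Type*}
    {l : Filter ι} [l.IsCountablyGenerated] {f : ι → E → ℝ} (hf : ∀ i, LipschitzWith C (f i))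
    {v : E} (hgrad : ∀ h : E → ℝ, Integrable h μ →
      Tendsto (fun i => ∫ y, h y * fderiv ℝ (f i) y v ∂μ) l (𝓝 0))
    (hS : MeasurableSet S) (hS' : μ S ≠ ⊤) :
    Tendsto (fun i => ∫ y in S, (f i (y + v) - f i y) ∂μ) l (𝓝 0) := by
  simp_rw [fun i => (hf i).setIntegral_comp_add_right_sub_eq_intervalIntegral hS' v]
  have hlim : ∀ t : ℝ, Tendsto (fun i => ∫ y in S, fderiv ℝ (f i) (y + t • v) v ∂μ) l (𝓝 0) := by
    intro t
    refine (hgrad (fun z => S.indicator 1 (z - t • v)) ?_).congr fun i => ?_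
    · exact ((integrable_indicator_iff hS).2 (integrableOn_const hS')).comp_sub_right (t • v)
    · exact (setIntegral_comp_add_right_eq_integral_indicator (μ := μ)
        (fun z => fderiv ℝ (f i) z v) hS (t • v)).symm
  simpa using intervalIntegral.tendsto_integral_filter_of_dominated_convergence
    (fun _ => C * ‖v‖ * μ.real S)
    (Eventually.of_forall fun i =>
      ((hf i).measurable_setIntegral_fderiv_comp_add_smul_apply hS' v).aestronglyMeasurable)
    (Eventually.of_forall fun i => ae_of_all _ fun t _ =>
      (hf i).norm_setIntegral_fderiv_apply_le hS' (t • v) v)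
    intervalIntegrable_const (ae_of_all _ fun t _ => hlim t)

theorem tendsto_sub_apply_zero_of_tendsto_integral_mul_fderiv {ι : Type*}
    {l : Filter ι} [l.IsCountablyGenerated] {f : ι → E → ℝ} (hf : ∀ i, LipschitzWith C (f i))
    (v : E) (hgrad : ∀ h : E → ℝ, Integrable h μ →
      Tendsto (fun i => ∫ y, h y * fderiv ℝ (f i) y v ∂μ) l (𝓝 0)) :
    Tendsto (fun i => f i v - f i 0) l (𝓝 0) := by
  refine Metric.tendsto_nhds.2 fun ε hε => ?_
  obtain ⟨r, hr, hCr⟩ := exists_pos_mul_lt (half_pos hε) (2 * C)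
  have hball : μ (ball 0 r) ≠ ⊤ := measure_ball_lt_top.ne
  have hm : 0 < μ.real (ball 0 r) :=
    ENNReal.toReal_pos (measure_ball_pos μ 0 hr).ne' hball
  filter_upwards [Metric.tendsto_nhds.1
    (tendsto_setIntegral_comp_add_right_sub_of_tendsto_integral_mul_fderiv hf hgrad
      measurableSet_ball hball) (ε / 2 * μ.real (ball 0 r)) (by positivity)] with i hi
  have hle := (hf i).norm_setIntegral_comp_add_right_sub_sub_le hball ball_subset_closedBall v
  rw [dist_zero_right] at hi ⊢
  refine lt_of_mul_lt_mul_left ?_ hm.le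
  calc μ.real (ball 0 r) * ‖f i v - f i 0‖
      = ‖μ.real (ball 0 r) * (f i v - f i 0)‖ := by rw [norm_mul, Real.norm_of_nonneg hm.le]
    _ ≤ ‖∫ y in ball 0 r, (f i (y + v) - f i y) ∂μ‖
        + ‖∫ y in ball 0 r, (f i (y + v) - f i y) ∂μ - μ.real (ball 0 r) * (f i v - f i 0)‖ :=
      norm_le_norm_add_norm_sub _ _
    _ < ε / 2 * μ.real (ball 0 r) + 2 * C * r * μ.real (ball 0 r) := add_lt_add_of_lt_of_le hi hle
    _ ≤ μ.real (ball 0 r) * ε := by nlinarith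

end

theorem stmt_5_general (d : ℕ) (L : ℝ)
    (f : ℕ → EuclideanSpace ℝ (Fin d) → ℝ)
    (hf_lip : ∀ n, LipschitzWith (Real.toNNReal L) (f n))
    (hf0 : Tendsto (fun n => f n 0) atTop (𝓝 0))
    (hgrad : ∀ h : EuclideanSpace ℝ (Fin d) → ℝ, Integrable h →
      ∀ v : EuclideanSpace ℝ (Fin d),
        Tendsto (fun n => ∫ x, h x * (fderiv ℝ (f n) x v)) atTop (𝓝 0)) :
    ∀ K : Set (EuclideanSpace ℝ (Fin d)), IsCompact K →
      TendstoUniformlyOn (fun n x => f n x) 0 atTop K := by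
  have hpt : ∀ x, Tendsto (fun n => f n x) atTop (𝓝 0) := fun x => by
    simpa using (tendsto_sub_apply_zero_of_tendsto_integral_mul_fderiv hf_lip x
      fun h hh => hgrad h hh x).add hf0
  exact fun K hK => (LipschitzWith.uniformEquicontinuous f _ hf_lip).equicontinuous
    |>.tendstoUniformlyOn_of_tendsto hpt hK

/-- If `fₙ : ℝ^d → ℝ` are uniformly Lipschitz, `fₙ(0) → 0`, and the a.e.-defined gradients
tend to `0` weak-* in `L^∞` (tested against every `L¹` function and every direction), then
`fₙ → 0` uniformly on every compact subset of `ℝ^d`. -/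
theorem stmt_5 (d : ℕ) (L : ℝ) (hL : 0 < L)
    (f : ℕ → EuclideanSpace ℝ (Fin d) → ℝ)
    (hf_lip : ∀ n, LipschitzWith (Real.toNNReal L) (f n))
    (hf0 : Tendsto (fun n => f n 0) atTop (𝓝 0))
    (hgrad : ∀ h : EuclideanSpace ℝ (Fin d) → ℝ, Integrable h →
      ∀ v : EuclideanSpace ℝ (Fin d),
        Tendsto (fun n => ∫ x, h x * (fderiv ℝ (f n) x v)) atTop (𝓝 0)) :
    ∀ K : Set (EuclideanSpace ℝ (Fin d)), IsCompact K →
      TendstoUniformlyOn (fun n x => f n x) 0 atTop K :=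
  stmt_5_general d L f hf_lip hf0 hgrad
end
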